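/- arXiv:2203.03705 — 6 statements merged into one kernel-verified Lean document; each statement's English description precedes it below -/
import Mathlib

section
/- Let Φ be a root system, let A = {α_1, …, α_ℓ} ⊆ Φ be any set of roots, and suppose γ = Σ_{i=1}^ℓ n_i α_i ∈ Φ with all n_i natural numbers. Then γ can be written as a sum γ = α_{i_1} + α_{i_2} + ⋯ + α_{i_m} of elements of A (with repetitions allowed) such that every prefix sum α_{i_1} + ⋯ + α_{i_k} (1 ≤ k ≤ m) is itself a root in Φ. -/
open scoped RealInnerProductSpace

/-- A (reduced) root system in a real inner product space. -/
def IsRootSystem {V : Type*} [NormedAddCommGroup V] [InnerProductSpace ℝ V] (Φ : Set V) : Prop :=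
  Φ.Finite ∧ (0 : V) ∉ Φ ∧ Submodule.span ℝ Φ = ⊤ ∧
  (∀ α ∈ Φ, ∀ β ∈ Φ, β - (2 * ⟪α, β⟫ / ⟪α, α⟫) • α ∈ Φ) ∧
  (∀ α ∈ Φ, ∀ β ∈ Φ, ∃ n : ℤ, 2 * ⟪α, β⟫ / ⟪α, α⟫ = (n : ℝ)) ∧
  (∀ α ∈ Φ, ∀ t : ℝ, t • α ∈ Φ → t = 1 ∨ t = -1)


lemma RS.neg_mem {V : Type*} [NormedAddCommGroup V] [InnerProductSpace ℝ V]
    {Φ : Set V} (h : IsRootSystem Φ) {x : V} (hx : x ∈ Φ) : -x ∈ Φ := by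
  have h0 := h.2.1
  have hrefl := h.2.2.2.1
  have hx0 : x ≠ 0 := fun hc => h0 (hc ▸ hx)
  have hxx : ⟪x, x⟫ ≠ 0 := fun hc => hx0 (inner_self_eq_zero.mp hc)
  have hr := hrefl x hx x hx
  rw [mul_div_assoc, div_self hxx, mul_one] at hr
  have h2 : x - (2:ℝ) • x = -x := by rw [two_smul]; abel
  rwa [h2] at hr

lemma RS.sub_mem {V : Type*} [NormedAddCommGroup V] [InnerProductSpace ℝ V]
    {Φ : Set V} (h : IsRootSystem Φ) {a b : V} (ha : a ∈ Φ) (hb : b ∈ Φ)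
    (hab : a ≠ b) (hpos : 0 < ⟪a, b⟫) : b - a ∈ Φ := by
  have h0 := h.2.1
  have hrefl := h.2.2.2.1
  have hint := h.2.2.2.2.1
  have hred := h.2.2.2.2.2
  have ha0 : a ≠ 0 := fun hc => h0 (hc ▸ ha)
  have hb0 : b ≠ 0 := fun hc => h0 (hc ▸ hb)
  have haa : (0:ℝ) < ⟪a, a⟫ :=
    lt_of_le_of_ne real_inner_self_nonneg (fun hc => ha0 (inner_self_eq_zero.mp hc.symm))
  have hbb : (0:ℝ) < ⟪b, b⟫ :=
    lt_of_le_of_ne real_inner_self_nonneg (fun hc => hb0 (inner_self_eq_zero.mp hc.symm))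
  obtain ⟨p, hp⟩ := hint a ha b hb
  obtain ⟨q, hq⟩ := hint b hb a ha
  have hba : ⟪b, a⟫ = ⟪a, b⟫ := (real_inner_comm a b)
  have hp' : 2 * ⟪a, b⟫ = (p:ℝ) * ⟪a, a⟫ := by
    field_simp at hp; linarith [hp]
  have hq' : 2 * ⟪a, b⟫ = (q:ℝ) * ⟪b, b⟫ := by
    rw [hba] at hq; field_simp at hq; linarith [hq]
  have hppos : (0:ℝ) < (p:ℝ) := by nlinarith
  have hqpos : (0:ℝ) < (q:ℝ) := by nlinarith
  have hp1 : 1 ≤ p := by exact_mod_cast hppos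
  have hq1 : 1 ≤ q := by exact_mod_cast hqpos
  by_cases hpcase : p = 1
  · have hr := hrefl a ha b hb
    rw [hp, hpcase] at hr
    simpa using hr
  by_cases hqcase : q = 1
  · have hr := hrefl b hb a ha
    rw [hq, hqcase] at hr
    simp only [Int.cast_one, one_smul] at hr
    have := RS.neg_mem h hr
    simpa using this
  · exfalso
    have hp2 : (2:ℝ) ≤ (p:ℝ) := by
      have : 2 ≤ p := lt_of_le_of_ne hp1 (Ne.symm hpcase)
      exact_mod_cast this
    have hq2 : (2:ℝ) ≤ (q:ℝ) := by
      have : 2 ≤ q := lt_of_le_of_ne hq1 (Ne.symm hqcase)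
      exact_mod_cast this
    have h1 : ⟪a, a⟫ ≤ ⟪a, b⟫ := by nlinarith
    have h2 : ⟪b, b⟫ ≤ ⟪a, b⟫ := by nlinarith
    have hcs : ⟪a, b⟫ * ⟪a, b⟫ ≤ ⟪a, a⟫ * ⟪b, b⟫ := real_inner_mul_inner_self_le a b
    have heq : ⟪a, b⟫ * ⟪a, b⟫ = ⟪a, a⟫ * ⟪b, b⟫ := le_antisymm hcs (by nlinarith)
    have hnorm : ‖⟪a, b⟫‖ = ‖a‖ * ‖b‖ := by
      have h3 : ⟪a, a⟫ = ‖a‖ * ‖a‖ := real_inner_self_eq_norm_mul_norm a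
      have h4 : ⟪b, b⟫ = ‖b‖ * ‖b‖ := real_inner_self_eq_norm_mul_norm b
      rw [Real.norm_eq_abs]
      nlinarith [abs_nonneg ⟪a, b⟫, abs_mul_abs_self ⟪a, b⟫, norm_nonneg a, norm_nonneg b,
        mul_nonneg (norm_nonneg a) (norm_nonneg b)]
    obtain ⟨r, hr0, hr⟩ := (norm_inner_eq_norm_iff (𝕜 := ℝ) ha0 hb0).mp hnorm
    rcases hred a ha r (hr ▸ hb) with h1' | h1'
    · exact hab (by rw [hr, h1', one_smul])
    · rw [hr, h1', neg_smul, one_smul, inner_neg_right] at hpos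
      nlinarith
lemma RS.aux {V : Type*} [NormedAddCommGroup V] [InnerProductSpace ℝ V]
    (Φ : Set V) (h : IsRootSystem Φ) (ℓ : ℕ) (α : Fin ℓ → V) (hA : ∀ i, α i ∈ Φ) :
    ∀ N : ℕ, ∀ n : Fin ℓ → ℕ, (∑ i, n i) = N → ∀ γ : V, γ ∈ Φ →
      γ = ∑ i, (n i : ℝ) • α i →
    ∃ (m : ℕ) (f : Fin m → Fin ℓ), γ = ∑ j, α (f j) ∧
      ∀ k : ℕ, 1 ≤ k → k ≤ m →
        (∑ j ∈ Finset.univ.filter (fun j : Fin m => (j : ℕ) < k), α (f j)) ∈ Φ := by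
  intro N
  induction N using Nat.strong_induction_on with
  | _ N IH =>
  intro n hN γ hγΦ hγ
  have h0 := h.2.1
  have hγ0 : γ ≠ 0 := fun hc => h0 (hc ▸ hγΦ)
  have hγγ : (0:ℝ) < ⟪γ, γ⟫ :=
    lt_of_le_of_ne real_inner_self_nonneg (fun hc => hγ0 (inner_self_eq_zero.mp hc.symm))
  have hsum : ⟪γ, γ⟫ = ∑ i, (n i : ℝ) * ⟪γ, α i⟫ := by
    nth_rewrite 2 [hγ]
    rw [inner_sum]
    exact Finset.sum_congr rfl fun i _ => real_inner_smul_right γ (α i) (n i)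
  have hex : ∃ i, 0 < n i ∧ (0:ℝ) < ⟪γ, α i⟫ := by
    by_contra hc
    push_neg at hc
    have hle : ⟪γ, γ⟫ ≤ 0 := by
      rw [hsum]
      apply Finset.sum_nonpos
      intro i _
      rcases Nat.eq_zero_or_pos (n i) with h0' | h0'
      · simp [h0']
      · exact mul_nonpos_of_nonneg_of_nonpos (by positivity) (hc i h0')
    linarith
  obtain ⟨i, hni, hipos⟩ := hex
  by_cases hcase : γ = α i
  · refine ⟨1, fun _ => i, by simp [hcase], ?_⟩
    intro k hk1 _
    have hall : ∀ j : Fin 1, (j : ℕ) < k := fun j => lt_of_lt_of_le j.isLt hk1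
    rw [Finset.filter_true_of_mem (fun j _ => hall j)]
    simpa [hcase] using hγΦ
  · -- γ - α i ∈ Φ
    have hd : γ - α i ∈ Φ :=
      RS.sub_mem h (hA i) hγΦ (fun hc => hcase hc.symm)
        (by rwa [real_inner_comm])
    set n' : Fin ℓ → ℕ := Function.update n i (n i - 1) with hn'
    have hN1 : 1 ≤ N := by
      rw [← hN]
      calc 1 ≤ n i := hni
      _ ≤ ∑ j, n j := Finset.single_le_sum (fun j _ => Nat.zero_le _) (Finset.mem_univ i)
    have hNsum : (∑ j, n' j) = N - 1 := by
      have e1 : (∑ j, n' j) = (n i - 1) + ∑ j ∈ Finset.univ \ {i}, n j :=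
        Finset.sum_update_of_mem (Finset.mem_univ i) n (n i - 1)
      have e2 : (∑ j, n j) = (∑ j ∈ Finset.univ \ {i}, n j) + n i :=
        Finset.sum_eq_sum_sdiff_singleton_add (Finset.mem_univ i) n
      omega
    have heq : γ - α i = ∑ j, (n' j : ℝ) • α j := by
      have hterm : ∀ j : Fin ℓ, (n' j : ℝ) • α j
          = (n j : ℝ) • α j - (if j = i then α i else 0) := by
        intro j
        by_cases hj : j = i
        · subst hj
          rw [hn']
          simp only [Function.update_self, if_pos rfl]
          have : ((n j - 1 : ℕ) : ℝ) = (n j : ℝ) - 1 := by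
            have : 1 ≤ n j := hni
            push_cast [this]
            ring
          rw [this, sub_smul, one_smul]
          simp
        · rw [hn']
          simp [Function.update_of_ne hj, hj]
      rw [hγ]
      rw [Finset.sum_congr rfl fun j _ => hterm j, Finset.sum_sub_distrib,
        Finset.sum_ite_eq' Finset.univ i (fun _ => α i)]
      simp
    obtain ⟨m, f, hfs, hfp⟩ := IH (N - 1) (by omega) n' hNsum (γ - α i) hd heq
    refine ⟨m + 1, Fin.snoc f i, ?_, ?_⟩
    · rw [Fin.sum_univ_castSucc]
      simp only [Fin.snoc_castSucc, Fin.snoc_last]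
      rw [← hfs]
      abel
    · intro k hk1 hk2
      rw [Finset.sum_filter, Fin.sum_univ_castSucc]
      simp only [Fin.snoc_castSucc, Fin.snoc_last, Fin.coe_castSucc, Fin.val_last]
      by_cases hkm : k ≤ m
      · rw [if_neg (not_lt.mpr hkm), add_zero, ← Finset.sum_filter]
        exact hfp k hk1 hkm
      · have hk : k = m + 1 := le_antisymm hk2 (not_le.mp hkm)
        subst hk
        rw [if_pos (Nat.lt_succ_self m),
          Finset.sum_congr rfl (fun j _ => if_pos (Nat.lt_succ_of_lt j.isLt)), ← hfs]
        simpa using hγΦ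


theorem stmt2 {V : Type*} [NormedAddCommGroup V] [InnerProductSpace ℝ V]
    (Φ : Set V) (h : IsRootSystem Φ) (ℓ : ℕ) (α : Fin ℓ → V)
    (hA : ∀ i, α i ∈ Φ) (n : Fin ℓ → ℕ) (γ : V) (hγΦ : γ ∈ Φ)
    (hγ : γ = ∑ i, (n i : ℝ) • α i) :
    ∃ (m : ℕ) (f : Fin m → Fin ℓ), γ = ∑ j, α (f j) ∧
      ∀ k : ℕ, 1 ≤ k → k ≤ m →
        (∑ j ∈ Finset.univ.filter (fun j : Fin m => (j : ℕ) < k), α (f j)) ∈ Φ :=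
  RS.aux Φ h ℓ α hA (∑ i, n i) n rfl γ hγΦ hγ
end

section
/- Let Φ be a root system, γ ∈ Φ, and A ⊆ Φ a finite set of roots such that γ is a nonnegative integer combination of elements of A but γ ∉ A. Then there exists α ∈ A appearing with positive coefficient such that γ − α ∈ Φ. -/
open scoped RealInnerProductSpace

lemma neg_mem_of_mem {V : Type*} [NormedAddCommGroup V] [InnerProductSpace ℝ V]
    {Φ : Set V} (h : IsRootSystem Φ) {δ : V} (hδ : δ ∈ Φ) : -δ ∈ Φ := by
  obtain ⟨hfin, h0, hspan, hrefl, hint, hred⟩ := h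
  have hδ0 : δ ≠ 0 := fun e => h0 (e ▸ hδ)
  have hd : ⟪δ, δ⟫ ≠ 0 := by
    simpa [inner_self_eq_zero] using hδ0
  have key := hrefl δ hδ δ hδ
  have hc : 2 * ⟪δ, δ⟫ / ⟪δ, δ⟫ = 2 := by field_simp
  rw [hc] at key
  have e : δ - (2:ℝ) • δ = -δ := by rw [two_smul]; abel
  rwa [e] at key

lemma sub_mem_of_inner_pos {V : Type*} [NormedAddCommGroup V] [InnerProductSpace ℝ V]
    {Φ : Set V} (h : IsRootSystem Φ) {α β : V} (hα : α ∈ Φ) (hβ : β ∈ Φ)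
    (hip : 0 < ⟪α, β⟫) (hne : β ≠ α) : β - α ∈ Φ := by
  obtain ⟨hfin, h0, hspan, hrefl, hint, hred⟩ := h
  have hα0 : α ≠ 0 := fun e => h0 (e ▸ hα)
  have hβ0 : β ≠ 0 := fun e => h0 (e ▸ hβ)
  have haa : (0:ℝ) < ⟪α, α⟫ := by
    rw [real_inner_self_eq_norm_sq]
    have := norm_pos_iff.2 hα0; positivity
  have hbb : (0:ℝ) < ⟪β, β⟫ := by
    rw [real_inner_self_eq_norm_sq]
    have := norm_pos_iff.2 hβ0; positivity
  -- β is not a scalar multiple of α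
  have hnotmul : ∀ r : ℝ, β ≠ r • α := by
    intro r hr
    have : r • α ∈ Φ := hr ▸ hβ
    rcases hred α hα r this with h1 | h1
    · apply hne; rw [hr, h1, one_smul]
    · rw [h1] at hr
      have : ⟪α, β⟫ = -⟪α, α⟫ := by rw [hr]; simp [real_inner_smul_right]
      nlinarith
  -- strict Cauchy-Schwarz
  have hcs : |⟪α, β⟫| < ‖α‖ * ‖β‖ := by
    rcases lt_or_eq_of_le (abs_real_inner_le_norm α β) with h' | h'
    · exact h'
    · exfalso
      have hnn : (0:ℝ) < ‖α‖ * ‖β‖ := by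
        have := norm_pos_iff.2 hα0
        have := norm_pos_iff.2 hβ0
        positivity
      have : |⟪α, β⟫ / (‖α‖ * ‖β‖)| = 1 := by
        rw [abs_div, h', abs_of_pos hnn, div_self hnn.ne']
      obtain ⟨-, r, -, hr⟩ := (abs_real_inner_div_norm_mul_norm_eq_one_iff α β).1 this
      exact hnotmul r hr
  obtain ⟨p, hp⟩ := hint α hα β hβ
  obtain ⟨q, hq⟩ := hint β hβ α hα
  have hab : ⟪β, α⟫ = ⟪α, β⟫ := real_inner_comm α β
  have hp0 : (0:ℝ) < (p:ℝ) := by rw [← hp]; positivity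
  have hq0 : (0:ℝ) < (q:ℝ) := by rw [← hq, hab]; positivity
  have hp1 : 1 ≤ p := by exact_mod_cast hp0
  have hq1 : 1 ≤ q := by exact_mod_cast hq0
  have hpq : (p:ℝ) * q < 4 := by
    have h1 : (p:ℝ) * q = 4 * ⟪α, β⟫^2 / (⟪α, α⟫ * ⟪β, β⟫) := by
      rw [← hp, ← hq, hab]; field_simp; ring
    have h2 : ⟪α, β⟫^2 < ⟪α, α⟫ * ⟪β, β⟫ := by
      have := hcs
      rw [← sq_abs]
      calc |⟪α, β⟫|^2 < (‖α‖ * ‖β‖)^2 := by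
            apply sq_lt_sq' _ hcs; nlinarith [abs_nonneg ⟪α, β⟫]
        _ = ⟪α, α⟫ * ⟪β, β⟫ := by
            rw [real_inner_self_eq_norm_sq, real_inner_self_eq_norm_sq]; ring
    rw [h1]
    rw [div_lt_iff₀ (by positivity)]
    nlinarith
  have hpqZ : p * q < 4 := by exact_mod_cast hpq
  have : p = 1 ∨ q = 1 := by
    by_contra hc
    push_neg at hc
    have : 2 ≤ p := by omega
    have : 2 ≤ q := by omega
    nlinarith
  rcases this with h1 | h1
  · have key := hrefl α hα β hβ
    rw [hp, h1] at key
    rw [show (((1:ℤ):ℝ)) = 1 by norm_num, one_smul] at key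
    exact key
  · have key := hrefl β hβ α hα
    rw [hq, h1] at key
    rw [show (((1:ℤ):ℝ)) = 1 by norm_num, one_smul] at key
    have h2 : α - β = -(β - α) := by abel
    rw [h2] at key
    have := neg_mem_of_mem ⟨hfin, h0, hspan, hrefl, hint, hred⟩ key
    simpa using this

theorem stmt3 {V : Type*} [NormedAddCommGroup V] [InnerProductSpace ℝ V]
    (Φ : Set V) (h : IsRootSystem Φ) (A : Finset V) (hA : ↑A ⊆ Φ)
    (n : V → ℕ) (γ : V) (hγΦ : γ ∈ Φ)
    (hγ : γ = ∑ α ∈ A, (n α : ℝ) • α) (hγA : γ ∉ A) :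
    ∃ α ∈ A, 0 < n α ∧ γ - α ∈ Φ := by
  have h0 : (0:V) ∉ Φ := h.2.1
  have hγ0 : γ ≠ 0 := fun e => h0 (e ▸ hγΦ)
  have hγγ : (0:ℝ) < ⟪γ, γ⟫ := by
    rw [real_inner_self_eq_norm_sq]
    have := norm_pos_iff.2 hγ0; positivity
  have hsum : ⟪γ, γ⟫ = ∑ α ∈ A, (n α : ℝ) * ⟪γ, α⟫ := by
    nth_rewrite 2 [hγ]
    rw [inner_sum]
    simp [real_inner_smul_right]
  have : ∃ α ∈ A, 0 < (n α : ℝ) * ⟪γ, α⟫ := by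
    by_contra hc
    push_neg at hc
    have : ⟪γ, γ⟫ ≤ 0 := hsum ▸ Finset.sum_nonpos hc
    linarith
  obtain ⟨α, hαA, hpos⟩ := this
  have hnα : 0 < n α := by
    by_contra hc
    push_neg at hc
    simp [Nat.le_zero.1 hc] at hpos
  have hipos : 0 < ⟪α, γ⟫ := by
    rw [real_inner_comm]
    nlinarith [(Nat.cast_nonneg (n α) : (0:ℝ) ≤ (n α : ℝ)), hpos]
  exact ⟨α, hαA, hnα, sub_mem_of_inner_pos h (hA hαA) hγΦ hipos (fun e => hγA (e ▸ hαA))⟩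
end

section
/- Let F be a field with char(F) > max(i, j) (or char(F) = 0), fix i, j, d₁, d₂ ∈ ℕ, and set d = i·d₁ + j·d₂. Then the space of polynomials in F[x] of degree at most d is spanned by the set of products f^i · g^j where f ranges over polynomials of degree at most d₁ and g over polynomials of degree at most d₂. -/
open Polynomial Pointwise

lemma extract_lemma {F V : Type*} [Field F] [AddCommGroup V] [Module F V]
    (M : Submodule F V) (n : ℕ) (p : Fin (n + 1) → V) (c : Fin (n + 1) → F)
    (hc : Function.Injective c)
    (h : ∀ t, (∑ s : Fin (n + 1), c t ^ (s : ℕ) • p s) ∈ M) : ∀ s, p s ∈ M := by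
  classical
  set A : Matrix (Fin (n+1)) (Fin (n+1)) F := Matrix.vandermonde c with hA
  have hdet : IsUnit A.det := by
    simpa using (Matrix.det_vandermonde_ne_zero_iff.2 hc).isUnit
  intro s
  have key : p s = ∑ t : Fin (n+1), A⁻¹ s t • (∑ u : Fin (n+1), c t ^ (u : ℕ) • p u) := by
    simp_rw [Finset.smul_sum, smul_smul]
    rw [Finset.sum_comm]
    have inv : A⁻¹ * A = 1 := Matrix.nonsing_inv_mul A hdet
    have h2 : ∀ u : Fin (n+1), (∑ t : Fin (n+1), (A⁻¹ s t * c t ^ (u : ℕ)) • p u)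
        = ((A⁻¹ * A) s u) • p u := by
      intro u
      rw [Matrix.mul_apply, Finset.sum_smul]
      simp [hA, Matrix.vandermonde_apply]
    simp_rw [h2, inv, Matrix.one_apply]
    simp
  rw [key]
  exact Submodule.sum_mem _ fun t _ => Submodule.smul_mem _ _ (h t)

lemma cast_factorial_ne_zero {F : Type*} [Field F] (m : ℕ)
    (h : ∀ n : ℕ, 0 < n → n ≤ m → (n : F) ≠ 0) : ((Nat.factorial m : ℕ) : F) ≠ 0 := by
  induction m with
  | zero => simp [Nat.factorial]
  | succ k ih =>
    rw [Nat.factorial_succ, Nat.cast_mul]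
    exact mul_ne_zero (h (k+1) (Nat.succ_pos k) le_rfl)
      (ih fun n hn hnk => h n hn (hnk.trans (Nat.le_succ k)))

lemma cast_choose_ne_zero {F : Type*} [Field F] (i s : ℕ) (hs : s ≤ i)
    (h : ∀ n : ℕ, 0 < n → n ≤ i → (n : F) ≠ 0) : ((Nat.choose i s : ℕ) : F) ≠ 0 := by
  have key := Nat.choose_mul_factorial_mul_factorial hs
  have hfi : ((Nat.factorial i : ℕ) : F) ≠ 0 := cast_factorial_ne_zero i h
  intro hc
  apply hfi
  rw [← key]
  push_cast
  rw [hc, zero_mul, zero_mul]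

lemma pow_span {F : Type*} [Field F] (i d : ℕ)
    (hch : ∀ n : ℕ, 0 < n → n ≤ i → (n : F) ≠ 0) :
    degreeLE F ((i * d : ℕ) : WithBot ℕ) ≤
      Submodule.span F {h : F[X] | ∃ f ∈ degreeLE F (d : WithBot ℕ), h = f ^ i} := by
  classical
  rw [degreeLE_eq_span_X_pow, Submodule.span_le]
  intro x hx
  simp only [Finset.coe_image, Set.mem_image, Finset.mem_coe, Finset.mem_range] at hx
  obtain ⟨k, hk, rfl⟩ := hx
  replace hk : k ≤ i * d := Nat.lt_succ_iff.mp hk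
  set S : Set F[X] := {h : F[X] | ∃ f ∈ degreeLE F (d : WithBot ℕ), h = f ^ i} with hS
  have main : ∀ a b s : ℕ, a ≤ d → b ≤ d → s ≤ i →
      (X : F[X]) ^ (a * (i - s) + b * s) ∈ Submodule.span F S := by
    intro a b s ha hb hs
    set p : Fin (i+1) → F[X] :=
      fun u => (Nat.choose i (u : ℕ) : F) • X ^ (a * (i - (u : ℕ)) + b * (u : ℕ)) with hp
    have hc : Function.Injective (fun t : Fin (i+1) => ((t : ℕ) : F)) := by
      intro t u htu
      simp only at htu
      by_contra hne
      rcases Ne.lt_or_gt (fun h : (t:ℕ) = (u:ℕ) => hne (Fin.ext h)) with hlt | hlt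
      · have h1 := hch ((u:ℕ) - (t:ℕ)) (Nat.sub_pos_of_lt hlt)
          (le_trans (Nat.sub_le _ _) (Nat.lt_succ_iff.mp u.isLt))
        apply h1
        have h2 : (((u:ℕ) : F)) - ((t:ℕ) : F) = 0 := by rw [htu]; ring
        rwa [← Nat.cast_sub hlt.le] at h2
      · have h1 := hch ((t:ℕ) - (u:ℕ)) (Nat.sub_pos_of_lt hlt)
          (le_trans (Nat.sub_le _ _) (Nat.lt_succ_iff.mp t.isLt))
        apply h1
        have h2 : (((t:ℕ) : F)) - ((u:ℕ) : F) = 0 := by rw [htu]; ring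
        rwa [← Nat.cast_sub hlt.le] at h2
    have hsum : ∀ t : Fin (i+1),
        (∑ u : Fin (i+1), ((t : ℕ) : F) ^ (u : ℕ) • p u) ∈ Submodule.span F S := by
      intro t
      set tc : F := ((t : ℕ) : F) with htc
      have hexp : (∑ u : Fin (i+1), tc ^ (u : ℕ) • p u)
          = (tc • X ^ b + X ^ a) ^ i := by
        rw [add_pow]
        rw [Fin.sum_univ_eq_sum_range (fun m : ℕ =>
          tc ^ m • ((Nat.choose i m : F) • (X : F[X]) ^ (a * (i - m) + b * m)))]
        refine Finset.sum_congr rfl fun m _ => ?_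
        simp only [_root_.smul_pow, smul_eq_C_mul, ← C_pow, ← pow_mul]
        rw [← C_eq_natCast]
        simp only [map_pow]
        ring
      rw [hexp]
      apply Submodule.subset_span
      refine ⟨tc • X ^ b + X ^ a, ?_, rfl⟩
      rw [mem_degreeLE]
      refine le_trans (degree_add_le _ _) (max_le ?_ ?_)
      · refine le_trans (degree_smul_le _ _) ?_
        simpa [degree_X_pow] using (WithBot.coe_le_coe.2 hb : (b : WithBot ℕ) ≤ d)
      · simpa [degree_X_pow] using (WithBot.coe_le_coe.2 ha : (a : WithBot ℕ) ≤ d)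
    have hmem := extract_lemma (Submodule.span F S) i p _ hc hsum ⟨s, Nat.lt_succ_of_le hs⟩
    rw [hp] at hmem
    simp only at hmem
    have hch' : ((Nat.choose i s : ℕ) : F) ≠ 0 := cast_choose_ne_zero i s hs hch
    have hmem2 := Submodule.smul_mem (Submodule.span F S)
      ((Nat.choose i s : ℕ) : F)⁻¹ hmem
    rwa [smul_smul, inv_mul_cancel₀ hch', one_smul] at hmem2
  rcases Nat.eq_zero_or_pos i with hi | hi
  · subst hi
    simp only [Nat.zero_mul, Nat.le_zero] at hk
    subst hk
    apply Submodule.subset_span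
    exact ⟨0, by simp [mem_degreeLE], by simp⟩
  · set q := k / i with hq
    set r := k % i with hr
    have hk' : k = i * q + r := (Nat.div_add_mod k i).symm
    have hrlt : r < i := Nat.mod_lt _ hi
    have hqd : q ≤ d := by
      rw [hq]
      calc k / i ≤ (i * d) / i := Nat.div_le_div_right hk
        _ = d := Nat.mul_div_cancel_left d hi
    rcases Nat.eq_zero_or_pos r with hr0 | hr0
    · have hexp : q * (i - 0) + q * 0 = k := by
        rw [Nat.sub_zero, Nat.mul_zero, Nat.add_zero, hk', hr0, Nat.add_zero, Nat.mul_comm]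
      have := main q q 0 hqd hqd (Nat.zero_le i)
      rwa [hexp] at this
    · have hqd' : q + 1 ≤ d := by
        by_contra hcon
        have hqeq : q = d := le_antisymm hqd (by omega)
        have : k = i * d + r := by rw [hk', hqeq]
        omega
      obtain ⟨m, hm⟩ := Nat.exists_eq_add_of_le hrlt.le
      have hexp : q * (i - r) + (q + 1) * r = k := by
        rw [hk', hm]
        have : r + m - r = m := by omega
        rw [this]; ring
      have := main q (q + 1) r hqd hqd' hrlt.le
      rwa [hexp] at this

theorem stmt4 (F : Type*) [Field F] (i j d₁ d₂ : ℕ)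
    (hchar : ∀ n : ℕ, 0 < n → n ≤ max i j → (n : F) ≠ 0) :
    Polynomial.degreeLE F ((i * d₁ + j * d₂ : ℕ) : WithBot ℕ) =
      Submodule.span F {h : Polynomial F | ∃ f g : Polynomial F,
        f ∈ Polynomial.degreeLE F (d₁ : WithBot ℕ) ∧
        g ∈ Polynomial.degreeLE F (d₂ : WithBot ℕ) ∧ h = f ^ i * g ^ j} := by
  classical
  set S : Set F[X] := {h : Polynomial F | ∃ f g : Polynomial F,
        f ∈ Polynomial.degreeLE F (d₁ : WithBot ℕ) ∧
        g ∈ Polynomial.degreeLE F (d₂ : WithBot ℕ) ∧ h = f ^ i * g ^ j} with hS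
  apply le_antisymm
  · -- forward inclusion via monomials
    rw [degreeLE_eq_span_X_pow, Submodule.span_le]
    intro x hx
    simp only [Finset.coe_image, Set.mem_image, Finset.mem_coe, Finset.mem_range] at hx
    obtain ⟨k, hk, rfl⟩ := hx
    replace hk : k ≤ i * d₁ + j * d₂ := Nat.lt_succ_iff.mp hk
    set S₁ : Set F[X] := {h : F[X] | ∃ f ∈ degreeLE F (d₁ : WithBot ℕ), h = f ^ i} with hS₁
    set S₂ : Set F[X] := {h : F[X] | ∃ g ∈ degreeLE F (d₂ : WithBot ℕ), h = g ^ j} with hS₂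
    have h₁ := pow_span (F := F) i d₁ fun n hn hni => hchar n hn (hni.trans (le_max_left i j))
    have h₂ := pow_span (F := F) j d₂ fun n hn hnj => hchar n hn (hnj.trans (le_max_right i j))
    set e₁ := min k (i * d₁) with he₁
    set e₂ := k - e₁ with he₂
    have he : e₁ + e₂ = k ∧ e₁ ≤ i * d₁ ∧ e₂ ≤ j * d₂ := by omega
    have hx1 : (X : F[X]) ^ e₁ ∈ Submodule.span F S₁ := by
      apply h₁
      rw [mem_degreeLE, degree_X_pow]
      exact_mod_cast he.2.1
    have hx2 : (X : F[X]) ^ e₂ ∈ Submodule.span F S₂ := by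
      apply h₂
      rw [mem_degreeLE, degree_X_pow]
      exact_mod_cast he.2.2
    have hmul : (X : F[X]) ^ e₁ * X ^ e₂ ∈ Submodule.span F S₁ * Submodule.span F S₂ :=
      Submodule.mul_mem_mul hx1 hx2
    rw [Submodule.span_mul_span] at hmul
    have hsub : S₁ * S₂ ⊆ S := by
      rintro _ ⟨p₁, hp₁, p₂, hp₂, rfl⟩
      obtain ⟨f, hf, rfl⟩ := hp₁
      obtain ⟨g, hg, rfl⟩ := hp₂
      exact ⟨f, g, hf, hg, rfl⟩
    have : (X : F[X]) ^ e₁ * X ^ e₂ ∈ Submodule.span F S :=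
      Submodule.span_mono hsub hmul
    rwa [← pow_add, he.1] at this
  · rw [Submodule.span_le]
    rintro _ ⟨f, g, hf, hg, rfl⟩
    rw [SetLike.mem_coe, mem_degreeLE]
    rw [mem_degreeLE] at hf hg
    calc degree (f ^ i * g ^ j) ≤ degree (f ^ i) + degree (g ^ j) := degree_mul_le _ _
      _ ≤ (i : WithBot ℕ) * d₁ + (j : WithBot ℕ) * d₂ :=
          add_le_add (degree_pow_le_of_le i hf) (degree_pow_le_of_le j hg)
      _ = ((i * d₁ + j * d₂ : ℕ) : WithBot ℕ) := by push_cast; ring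
end

section
/- Let G be a finite group with subgroups H_1, …, H_{d+1}, let K be the associated coset complex, and let σ be a face of K of type T ⊆ [d+1] with T ≠ ∅. Write H_S = ∩_{i∈S} H_i. Then the link of σ in K is isomorphic (as a simplicial complex) to the coset complex CC(H_T, (H_{T∪{i}} : i ∉ T)). -/
/-- A set of vertices of the coset complex (vertices are cosets, encoded as elements of the
quotients `G ⧸ H i`) is a face iff all the cosets share a common element. -/
def IsCosetFace {G : Type*} [Group G] {d : ℕ} (H : Fin (d + 1) → Subgroup G)
    (σ : Set (Σ i : Fin (d + 1), G ⧸ H i)) : Prop :=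
  ∃ g : G, ∀ v ∈ σ, (QuotientGroup.mk g : G ⧸ H v.1) = v.2

/-- The link of a face `σ` of the coset complex `CC(G, (H_1, …, H_{d+1}))` of type
`T ≠ ∅` is isomorphic to the coset complex `CC(H_T, (H_{T ∪ {i}} : i ∉ T))`:
there is an injection `φ` from the vertices of the latter to the vertices of the
coset complex of `G` whose image is the vertex set of the link of `σ`, and which
identifies the faces of `CC(H_T, (H_{T ∪ {i}} : i ∉ T))` with the faces of the link. -/
theorem stmt8 {G : Type*} [Group G] [Fintype G] (d : ℕ) (H : Fin (d + 1) → Subgroup G)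
    (T : Set (Fin (d + 1))) (hT : T.Nonempty)
    (σ : Set (Σ i : Fin (d + 1), G ⧸ H i)) (hσ : IsCosetFace H σ)
    (hσT : Sigma.fst '' σ = T) :
    ∃ φ : (Σ i : {i : Fin (d + 1) // i ∉ T},
        (↥(⨅ j ∈ T, H j)) ⧸ (H i.1).subgroupOf (⨅ j ∈ T, H j)) →
        (Σ i : Fin (d + 1), G ⧸ H i),
      Function.Injective φ ∧
      -- every vertex of the link is in the image of φ
      (∀ w, ({w} : Set _) ∩ σ = ∅ → IsCosetFace H (σ ∪ {w}) → ∃ v, φ v = w) ∧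
      -- φ identifies faces of the small coset complex with faces of the link
      (∀ τ : Set (Σ i : {i : Fin (d + 1) // i ∉ T},
          (↥(⨅ j ∈ T, H j)) ⧸ (H i.1).subgroupOf (⨅ j ∈ T, H j)),
        (∃ h : ↥(⨅ j ∈ T, H j), ∀ v ∈ τ,
            (QuotientGroup.mk h : (↥(⨅ j ∈ T, H j)) ⧸ (H v.1.1).subgroupOf (⨅ j ∈ T, H j))
              = v.2) ↔
          ((φ '' τ) ∩ σ = ∅ ∧ IsCosetFace H (σ ∪ φ '' τ))) := by
  classical
  obtain ⟨g, hg⟩ := hσ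
  -- characterization of membership in σ
  have hmem : ∀ v : (Σ i : Fin (d + 1), G ⧸ H i),
      v ∈ σ ↔ v.1 ∈ T ∧ v.2 = QuotientGroup.mk g := by
    intro v
    constructor
    · intro hv
      exact ⟨hσT ▸ ⟨v, hv, rfl⟩, (hg v hv).symm⟩
    · rintro ⟨h1, h2⟩
      rw [← hσT] at h1
      obtain ⟨⟨j, p⟩, hw, hw1⟩ := h1
      obtain ⟨i, q⟩ := v
      dsimp at hw1 h2
      subst hw1
      have hpq : p = q := by
        have := hg _ hw
        dsimp at this
        rw [h2, ← this]
      rwa [← hpq]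
  -- common element of an extension of σ differs from g by an element of H_T
  have hHT : ∀ g' : G, (∀ v ∈ σ, (QuotientGroup.mk g' : G ⧸ H v.1) = v.2) →
      g⁻¹ * g' ∈ ⨅ j ∈ T, H j := by
    intro g' hg'
    rw [Subgroup.mem_iInf]
    intro i
    rw [Subgroup.mem_iInf]
    intro hiT
    have h1 : (QuotientGroup.mk g' : G ⧸ H i) = QuotientGroup.mk g :=
      hg' ⟨i, QuotientGroup.mk g⟩ ((hmem _).2 ⟨hiT, rfl⟩)
    exact QuotientGroup.eq.mp h1.symm
  refine ⟨fun v => ⟨v.1.1, Quotient.map' (fun h : ↥(⨅ j ∈ T, H j) => g * (h : G))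
      (fun a b hab => ?_) v.2⟩, ?_, ?_, ?_⟩
  · -- well-definedness
    rw [QuotientGroup.leftRel_apply] at hab ⊢
    rw [Subgroup.mem_subgroupOf] at hab
    simpa [mul_assoc] using hab
  · -- injectivity
    rintro ⟨⟨i, hi⟩, q⟩ ⟨⟨j, hj⟩, p⟩ h
    obtain ⟨h1, h2⟩ := Sigma.mk.inj_iff.mp h
    dsimp at h1
    subst h1
    have h2' := eq_of_heq h2
    refine Sigma.ext rfl (heq_of_eq ?_)
    dsimp
    induction q using Quotient.inductionOn' with
    | h a =>
      induction p using Quotient.inductionOn' with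
      | h b =>
        rw [Quotient.map'_mk'', Quotient.map'_mk''] at h2'
        apply Quotient.sound'
        rw [QuotientGroup.leftRel_apply, Subgroup.mem_subgroupOf]
        have : (QuotientGroup.mk (g * (a : G)) : G ⧸ H i) = QuotientGroup.mk (g * (b : G)) := h2'
        have := QuotientGroup.eq.mp this
        simpa [mul_assoc] using this
  · -- link vertices are in the image
    rintro ⟨j, w2⟩ hdisj hface
    obtain ⟨g', hg'⟩ := hface
    have hgσ : ∀ v ∈ σ, (QuotientGroup.mk g' : G ⧸ H v.1) = v.2 := fun v hv => hg' v (Or.inl hv)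
    have hk := hHT g' hgσ
    have hw2 : (QuotientGroup.mk g' : G ⧸ H j) = w2 := hg' ⟨j, w2⟩ (Or.inr rfl)
    have hjT : j ∉ T := by
      intro hjT
      have hmemσ : (⟨j, w2⟩ : Σ i, G ⧸ H i) ∈ σ := by
        refine (hmem _).2 ⟨hjT, ?_⟩
        rw [← hw2]
        symm
        refine QuotientGroup.eq.mpr ?_
        have := Subgroup.mem_iInf.mp hk j
        exact Subgroup.mem_iInf.mp this hjT
      rw [Set.eq_empty_iff_forall_notMem] at hdisj
      exact hdisj _ ⟨rfl, hmemσ⟩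
    refine ⟨⟨⟨j, hjT⟩, QuotientGroup.mk ⟨g⁻¹ * g', hk⟩⟩, ?_⟩
    refine Sigma.ext rfl (heq_of_eq ?_)
    dsimp
    show (QuotientGroup.mk (g * (g⁻¹ * g')) : G ⧸ H j) = w2
    rw [mul_inv_cancel_left]
    exact hw2
  · -- face correspondence
    intro τ
    constructor
    · rintro ⟨h, hh⟩
      constructor
      · rw [Set.eq_empty_iff_forall_notMem]
        rintro x ⟨⟨v, hv, rfl⟩, hxσ⟩
        exact v.1.2 ((hmem _).1 hxσ).1
      · refine ⟨g * (h : G), ?_⟩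
        rintro v (hv | ⟨u, hu, rfl⟩)
        · obtain ⟨hvT, hv2⟩ := (hmem _).1 hv
          rw [hv2]
          refine (QuotientGroup.eq.mpr ?_).symm
          have hmemH : (h : G) ∈ H v.1 := by
            have := Subgroup.mem_iInf.mp h.2 v.1
            exact Subgroup.mem_iInf.mp this hvT
          simpa [mul_assoc] using hmemH
        · obtain ⟨⟨i, hi⟩, q⟩ := u
          have hhq := hh _ hu
          dsimp at hhq ⊢
          induction q using Quotient.inductionOn' with
          | h a =>
            rw [Quotient.map'_mk'']
            have : (QuotientGroup.mk h :
                (↥(⨅ j ∈ T, H j)) ⧸ (H i).subgroupOf (⨅ j ∈ T, H j)) = Quotient.mk'' a := hhq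
            have h2 := QuotientGroup.eq.mp this
            rw [Subgroup.mem_subgroupOf] at h2
            show (QuotientGroup.mk (g * (h : G)) : G ⧸ H i) = QuotientGroup.mk (g * (a : G))
            refine QuotientGroup.eq.mpr ?_
            simpa [mul_assoc] using h2
    · rintro ⟨hdisj, g', hg'⟩
      have hgσ : ∀ v ∈ σ, (QuotientGroup.mk g' : G ⧸ H v.1) = v.2 :=
        fun v hv => hg' v (Or.inl hv)
      have hk := hHT g' hgσ
      refine ⟨⟨g⁻¹ * g', hk⟩, ?_⟩
      rintro ⟨⟨i, hi⟩, q⟩ hv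
      dsimp
      induction q using Quotient.inductionOn' with
      | h a =>
        have hφ := hg' _ (Or.inr ⟨_, hv, rfl⟩)
        dsimp at hφ
        have : (QuotientGroup.mk g' : G ⧸ H i) = QuotientGroup.mk (g * (a : G)) := hφ
        have h2 := QuotientGroup.eq.mp this
        show (QuotientGroup.mk (⟨g⁻¹ * g', hk⟩ : ↥(⨅ j ∈ T, H j)) :
            (↥(⨅ j ∈ T, H j)) ⧸ (H i).subgroupOf (⨅ j ∈ T, H j)) = Quotient.mk'' a
        refine QuotientGroup.eq.mpr ?_
        rw [Subgroup.mem_subgroupOf]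
        simpa [mul_assoc] using h2
end

section
/- Let Ψ ⊆ Φ be a set of linearly independent roots in a root system Φ. Then there exists a simple system Π of Φ such that every element of Ψ is a positive root with respect to Π (indeed, a nonnegative integer combination of Π). -/
open scoped RealInnerProductSpace

/-- `P` is a simple system (base) for the root system `Φ`: a linearly independent
spanning subset of `Φ` such that every root is a nonnegative or nonpositive integer
combination of `P`. -/
def IsSimpleSystem {V : Type*} [NormedAddCommGroup V] [InnerProductSpace ℝ V]
    (Φ : Set V) (P : Finset V) : Prop :=
  ↑P ⊆ Φ ∧ LinearIndependent ℝ (fun x : P => (x : V)) ∧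
    Submodule.span ℝ (P : Set V) = ⊤ ∧
    ∀ γ ∈ Φ, (∃ n : V → ℕ, γ = ∑ α ∈ P, (n α : ℝ) • α) ∨
             (∃ n : V → ℕ, γ = -∑ α ∈ P, (n α : ℝ) • α)

/-!
Since `Ψ` is linearly independent, some functional equals `1` on all of `Ψ`; perturbing it
generically gives a functional `φ` that vanishes on no root and is still positive on `Ψ`. Call the
roots with `φ > 0` positive and the positive roots that are not the sum of two positive roots
simple. Descending along `φ`, every positive root is a sum of simple roots. Two distinct simple
roots form a non-acute angle, since otherwise their difference would be a root and one of them
would decompose. Finally, vectors lying strictly on one side of a hyperplane and forming pairwise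
non-acute angles are linearly independent.
-/

open Finset Filter Module Topology

section Indecomposable

variable {M : Type*} [AddCommMonoid M] [DecidableEq M]

def indecomposables (S : Finset M) : Finset M :=
  {α ∈ S | ∀ β ∈ S, ∀ γ ∈ S, α ≠ β + γ}

theorem indecomposables_subset (S : Finset M) : indecomposables S ⊆ S :=
  filter_subset _ _

theorem coe_subset_closure_indecomposables {S : Finset M} (φ : M →+ ℝ)
    (hφ : ∀ α ∈ S, 0 < φ α) :
    (S : Set M) ⊆ AddSubmonoid.closure (indecomposables S : Set M) := by
  classical
  set C := AddSubmonoid.closure (indecomposables S : Set M)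
  by_contra hS
  obtain ⟨α, hα, hmin⟩ := {α ∈ S | α ∉ C}.exists_min_image φ (by
    simpa [Set.not_subset, Finset.Nonempty] using hS)
  obtain ⟨hαS, hαC⟩ := mem_filter.1 hα
  have hdec : α ∉ indecomposables S := fun h => hαC (AddSubmonoid.subset_closure h)
  simp only [indecomposables, mem_filter, not_and, not_forall, not_not] at hdec
  obtain ⟨β, hβ, γ, hγ, rfl⟩ := hdec hαS
  have mem_C : ∀ δ ∈ S, φ δ < φ (β + γ) → δ ∈ C := fun δ hδ hlt =>
    by_contra fun h => (hmin δ (mem_filter.2 ⟨hδ, h⟩)).not_gt hlt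
  exact hαC (add_mem (mem_C β hβ (by simp [hφ γ hγ])) (mem_C γ hγ (by simp [hφ β hβ])))

end Indecomposable

theorem exists_nat_combination_of_mem_closure {V : Type*} [AddCommMonoid V] [Module ℝ V]
    {S : Finset V} {x : V} (hx : x ∈ AddSubmonoid.closure (S : Set V)) :
    ∃ n : V → ℕ, x = ∑ α ∈ S, (n α : ℝ) • α := by
  obtain ⟨n, -, rfl⟩ := AddSubmonoid.mem_closure_finset.1 hx
  exact ⟨n, by simp [Nat.cast_smul_eq_nsmul]⟩

theorem Set.Finite.exists_dual_forall_ne_zero_and_pos_of_pos {V : Type*} [AddCommGroup V]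
    [Module ℝ V] {S : Set V} (hS : S.Finite) (h0 : (0 : V) ∉ S) (φ₀ : Dual ℝ V) :
    ∃ φ : Dual ℝ V, ∀ α ∈ S, φ α ≠ 0 ∧ (0 < φ₀ α → 0 < φ α) := by
  have := hS.to_subtype
  obtain ⟨φ₁, hφ₁⟩ := Module.exists_dual_forall_apply_ne_zero (K := ℝ) ((↑) : S → V)
    fun α hα => h0 (hα ▸ α.2)
  -- For small `t ≠ 0`, `φ₀ + t • φ₁` keeps the sign of `φ₀ α` where it is nonzero, and equals
  -- `t * φ₁ α ≠ 0` where it vanishes.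
  have near : ∀ α ∈ S, ∀ᶠ t in 𝓝[≠] (0 : ℝ),
      φ₀ α + t * φ₁ α ≠ 0 ∧ (0 < φ₀ α → 0 < φ₀ α + t * φ₁ α) := by
    intro α hα
    have hlim : Tendsto (fun t : ℝ => φ₀ α + t * φ₁ α) (𝓝[≠] 0) (𝓝 (φ₀ α)) := by
      simpa using ((continuous_id.mul continuous_const).const_add (φ₀ α)).tendsto (0 : ℝ)
        |>.mono_left nhdsWithin_le_nhds
    rcases lt_trichotomy (φ₀ α) 0 with hneg | hzero | hpos
    · exact (hlim.eventually (eventually_lt_nhds hneg)).mono fun t ht =>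
        ⟨ht.ne, fun h => absurd h hneg.not_gt⟩
    · exact eventually_mem_nhdsWithin.mono fun t (ht : t ≠ 0) =>
        ⟨by simpa [hzero, ht] using hφ₁ ⟨α, hα⟩, by simp [hzero]⟩
    · exact (hlim.eventually (eventually_gt_nhds hpos)).mono fun t ht => ⟨ht.ne', fun _ => ht⟩
  obtain ⟨t, ht⟩ := ((hS.eventually_all).2 near).exists
  exact ⟨φ₀ + t • φ₁, by simpa using ht⟩

theorem exists_dual_eq_one_of_linearIndepOn {K V : Type*} [Field K] [AddCommGroup V] [Module K V]
    {Ψ : Set V} (hΨ : LinearIndepOn K id Ψ) : ∃ φ : Dual K V, ∀ ψ ∈ Ψ, φ ψ = 1 := by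
  let b := Basis.extend hΨ
  exact ⟨b.sumCoords, fun ψ hψ => by
    simpa [b] using b.sumCoords_self_apply ⟨ψ, hΨ.subset_extend _ hψ⟩⟩

section InnerProductSpace

variable {V : Type*} [NormedAddCommGroup V] [InnerProductSpace ℝ V]

theorem sum_filter_pos_smul_eq_zero_of_pairwise_inner_nonpos {S : Finset V}
    (hS : (S : Set V).Pairwise fun v w => ⟪v, w⟫ ≤ 0) {c : V → ℝ}
    (hc : ∑ v ∈ S, c v • v = 0) : ∑ v ∈ S with 0 < c v, c v • v = 0 := by
  set u := ∑ v ∈ S with 0 < c v, c v • v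
  have hu : u = ∑ w ∈ S with ¬ 0 < c w, (-c w) • w := by
    simp only [neg_smul, sum_neg_distrib]
    exact eq_neg_of_add_eq_zero_left ((sum_filter_add_sum_filter_not S _ _).trans hc)
  have hself : ⟪u, ∑ w ∈ S with ¬ 0 < c w, (-c w) • w⟫ ≤ 0 := by
    simp only [u, sum_inner, inner_sum, real_inner_smul_left, real_inner_smul_right]
    refine sum_nonpos fun w hw => sum_nonpos fun v hv => ?_
    rw [mem_filter] at hv hw
    have hvw : v ≠ w := by rintro rfl; exact hw.2 hv.2
    exact mul_nonpos_of_nonneg_of_nonpos (neg_nonneg.2 (not_lt.1 hw.2))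
      (mul_nonpos_of_nonneg_of_nonpos hv.2.le (hS hv.1 hw.1 hvw))
  rw [← hu] at hself
  exact real_inner_self_nonpos.1 hself

theorem linearIndepOn_of_pairwise_inner_nonpos {S : Finset V} (φ : Dual ℝ V)
    (hφ : ∀ v ∈ S, 0 < φ v) (hS : (S : Set V).Pairwise fun v w => ⟪v, w⟫ ≤ 0) :
    LinearIndepOn ℝ id (S : Set V) := by
  have nonpos : ∀ c : V → ℝ, ∑ v ∈ S, c v • v = 0 → ∀ v ∈ S, c v ≤ 0 := by
    intro c hc v hv
    by_contra! hcv
    have hzero := congr_arg φ (sum_filter_pos_smul_eq_zero_of_pairwise_inner_nonpos hS hc)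
    simp only [map_sum, map_smul, smul_eq_mul, map_zero] at hzero
    have hpos : 0 < ∑ w ∈ S with 0 < c w, c w * φ w :=
      sum_pos (fun w hw => mul_pos (mem_filter.1 hw).2 (hφ w (mem_filter.1 hw).1))
        ⟨v, mem_filter.2 ⟨hv, hcv⟩⟩
    exact hpos.ne' hzero
  refine linearIndepOn_finset_iff.2 fun c hc v hv => le_antisymm (nonpos c hc v hv) ?_
  simpa using nonpos (-c) (by simpa [neg_smul] using hc) v hv

end InnerProductSpace

namespace IsRootSystem

variable {V : Type*} [NormedAddCommGroup V] [InnerProductSpace ℝ V] {Φ : Set V}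

theorem neg_mem (h : IsRootSystem Φ) {α : V} (hα : α ∈ Φ) : -α ∈ Φ := by
  have hαα : ⟪α, α⟫ ≠ 0 := inner_self_ne_zero.2 fun h0 => h.2.1 (h0 ▸ hα)
  have := h.2.2.2.1 α hα α hα
  rwa [mul_div_assoc, div_self hαα, mul_one, two_smul, sub_add_cancel_left] at this

theorem inner_lt_norm_mul_norm (h : IsRootSystem Φ) {α β : V} (hα : α ∈ Φ) (hβ : β ∈ Φ)
    (hne : α ≠ β) : ⟪α, β⟫ < ‖α‖ * ‖β‖ := by
  have hα0 : ‖α‖ ≠ 0 := norm_ne_zero_iff.2 fun h0 => h.2.1 (h0 ▸ hα)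
  refine inner_lt_norm_mul_iff_real.2 fun hpar => ?_
  have hβ_eq : β = (‖β‖ / ‖α‖) • α := by
    rw [div_eq_inv_mul, mul_smul, hpar, smul_smul, inv_mul_cancel₀ hα0, one_smul]
  rcases h.2.2.2.2.2 α hα _ (hβ_eq ▸ hβ) with h1 | h1
  · exact hne (by rw [hβ_eq, h1, one_smul])
  · have : 0 ≤ ‖β‖ / ‖α‖ := by positivity
    linarith

theorem sub_mem_of_inner_pos (h : IsRootSystem Φ) {α β : V} (hα : α ∈ Φ) (hβ : β ∈ Φ)
    (hne : α ≠ β) (hpos : 0 < ⟪α, β⟫) : α - β ∈ Φ := by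
  have hcs := h.inner_lt_norm_mul_norm hα hβ hne
  have ⟨_, h0, _, hrefl, hint, _⟩ := h
  have hαpos : 0 < ‖α‖ := norm_pos_iff.2 fun hα0 => h0 (hα0 ▸ hα)
  have hβpos : 0 < ‖β‖ := norm_pos_iff.2 fun hβ0 => h0 (hβ0 ▸ hβ)
  have hαα : 0 < ⟪α, α⟫ := real_inner_self_pos.2 fun hα0 => h0 (hα0 ▸ hα)
  have hββ : 0 < ⟪β, β⟫ := real_inner_self_pos.2 fun hβ0 => h0 (hβ0 ▸ hβ)
  obtain ⟨n, hn⟩ := hint α hα β hβ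
  obtain ⟨m, hm⟩ := hint β hβ α hα
  rw [real_inner_comm] at hm
  -- The Cartan integers `n` and `m` are positive with `n * m < 4` by strict Cauchy–Schwarz,
  -- so one of them is `1`.
  have hn1 : 1 ≤ n := by
    have : (0 : ℝ) < n := hn ▸ div_pos (by positivity) hαα
    exact_mod_cast this
  have hm1 : 1 ≤ m := by
    have : (0 : ℝ) < m := hm ▸ div_pos (by positivity) hββ
    exact_mod_cast this
  have hnm : n * m < 4 := by
    suffices (n : ℝ) * m < 4 by exact_mod_cast this
    rw [← hn, ← hm, real_inner_self_eq_norm_sq, real_inner_self_eq_norm_sq, div_mul_div_comm,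
      div_lt_iff₀ (by positivity)]
    nlinarith [mul_self_lt_mul_self hpos.le hcs]
  have : n = 1 ∨ m = 1 := by
    by_contra! hnm'
    nlinarith [show 2 ≤ n by omega, show 2 ≤ m by omega]
  rcases this with rfl | rfl
  · have hβα := hrefl α hα β hβ
    rw [hn, Int.cast_one, one_smul] at hβα
    simpa using h.neg_mem hβα
  · have hαβ := hrefl β hβ α hα
    rwa [real_inner_comm, hm, Int.cast_one, one_smul] at hαβ

end IsRootSystem

section PositiveRoots

variable {V : Type*} [AddCommGroup V] [Module ℝ V] {Φ : Set V} {hΦ : Φ.Finite} {φ : Dual ℝ V}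

noncomputable def positiveRoots (hΦ : Φ.Finite) (φ : Dual ℝ V) : Finset V :=
  {α ∈ hΦ.toFinset | 0 < φ α}

theorem mem_positiveRoots {α : V} : α ∈ positiveRoots hΦ φ ↔ α ∈ Φ ∧ 0 < φ α := by
  simp [positiveRoots]

variable [DecidableEq V]

noncomputable def simpleRoots (hΦ : Φ.Finite) (φ : Dual ℝ V) : Finset V :=
  indecomposables (positiveRoots hΦ φ)

theorem simpleRoots_subset_positiveRoots : simpleRoots hΦ φ ⊆ positiveRoots hΦ φ :=
  indecomposables_subset _

theorem exists_nat_combination_simpleRoots {α : V} (hα : α ∈ positiveRoots hΦ φ) :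
    ∃ n : V → ℕ, α = ∑ p ∈ simpleRoots hΦ φ, (n p : ℝ) • p :=
  exists_nat_combination_of_mem_closure <| coe_subset_closure_indecomposables (φ : V →+ ℝ)
    (fun _ hβ => (mem_positiveRoots.1 hβ).2) hα

end PositiveRoots

namespace IsRootSystem

variable {V : Type*} [NormedAddCommGroup V] [InnerProductSpace ℝ V] {Φ : Set V} {φ : Dual ℝ V}

theorem mem_positiveRoots_or_neg_mem (h : IsRootSystem Φ) (hφ : ∀ α ∈ Φ, φ α ≠ 0) {α : V}
    (hα : α ∈ Φ) : α ∈ positiveRoots h.1 φ ∨ -α ∈ positiveRoots h.1 φ := by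
  simp only [mem_positiveRoots, map_neg, neg_pos]
  rcases (hφ α hα).lt_or_gt with hneg | hpos
  exacts [.inr ⟨h.neg_mem hα, hneg⟩, .inl ⟨hα, hpos⟩]

variable [DecidableEq V]

theorem pairwise_inner_simpleRoots_nonpos (h : IsRootSystem Φ) (hφ : ∀ α ∈ Φ, φ α ≠ 0) :
    (simpleRoots h.1 φ : Set V).Pairwise fun α β => ⟪α, β⟫ ≤ 0 := by
  intro α hα β hβ hne
  by_contra! hpos
  simp only [simpleRoots, indecomposables, coe_filter] at hα hβ
  rcases h.mem_positiveRoots_or_neg_mem hφ (h.sub_mem_of_inner_pos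
    (mem_positiveRoots.1 hα.1).1 (mem_positiveRoots.1 hβ.1).1 hne hpos) with hsub | hsub
  · exact hα.2 β hβ.1 _ hsub (add_sub_cancel β α).symm
  · rw [neg_sub] at hsub
    exact hβ.2 α hα.1 _ hsub (add_sub_cancel α β).symm

theorem isSimpleSystem_simpleRoots (h : IsRootSystem Φ) (hφ : ∀ α ∈ Φ, φ α ≠ 0) :
    IsSimpleSystem Φ (simpleRoots h.1 φ) := by
  have simple_pos : ∀ α ∈ simpleRoots h.1 φ, α ∈ Φ ∧ 0 < φ α := fun α hα =>
    mem_positiveRoots.1 (simpleRoots_subset_positiveRoots hα)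
  have hroots : ∀ γ ∈ Φ, (∃ n : V → ℕ, γ = ∑ α ∈ simpleRoots h.1 φ, (n α : ℝ) • α) ∨
      (∃ n : V → ℕ, γ = -∑ α ∈ simpleRoots h.1 φ, (n α : ℝ) • α) := by
    intro γ hγ
    rcases h.mem_positiveRoots_or_neg_mem hφ hγ with hpos | hneg
    · exact .inl (exists_nat_combination_simpleRoots hpos)
    · obtain ⟨n, hn⟩ := exists_nat_combination_simpleRoots hneg
      exact .inr ⟨n, by rw [← hn, neg_neg]⟩
  refine ⟨fun α hα => (simple_pos α hα).1, linearIndepOn_of_pairwise_inner_nonpos φ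
    (fun α hα => (simple_pos α hα).2) (h.pairwise_inner_simpleRoots_nonpos hφ), ?_, hroots⟩
  refine eq_top_iff.2 (h.2.2.1.symm.le.trans (Submodule.span_le.2 fun γ hγ => ?_))
  rcases hroots γ hγ with ⟨n, rfl⟩ | ⟨n, rfl⟩
  · exact Submodule.sum_smul_mem _ _ fun p hp => Submodule.subset_span hp
  · exact Submodule.neg_mem _ (Submodule.sum_smul_mem _ _ fun p hp => Submodule.subset_span hp)

end IsRootSystem

theorem stmt12 {V : Type*} [NormedAddCommGroup V] [InnerProductSpace ℝ V]
    (Φ : Set V) (h : IsRootSystem Φ) (Ψ : Set V) (hΨ : Ψ ⊆ Φ)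
    (hli : LinearIndependent ℝ (fun x : Ψ => (x : V))) :
    ∃ P : Finset V, IsSimpleSystem Φ P ∧
      ∀ ψ ∈ Ψ, ∃ n : V → ℕ, ψ = ∑ α ∈ P, (n α : ℝ) • α := by
  classical
  obtain ⟨φ₀, hφ₀⟩ := exists_dual_eq_one_of_linearIndepOn hli
  obtain ⟨φ, hφ⟩ := h.1.exists_dual_forall_ne_zero_and_pos_of_pos h.2.1 φ₀
  refine ⟨simpleRoots h.1 φ, h.isSimpleSystem_simpleRoots fun α hα => (hφ α hα).1,
    fun ψ hψ => exists_nat_combination_simpleRoots (mem_positiveRoots.2 ⟨hΨ hψ, ?_⟩)⟩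
  exact (hφ ψ (hΨ hψ)).2 (by simp [hφ₀ ψ hψ])
end

section
/- Let p > 2 be prime and fix a nonzero constant C ∈ F_p. For r = (r_1,…,r_9) ∈ F_p^9 define the character sum S(r) = E_{a,b,c,d ∈ F_p}[Exp_p(r_1 a + r_2 b + r_3 ac + r_4(ad+bc) + r_5 bd + r_6 C a c² + r_7 C(b c² + 2acd) + r_8 C(2bcd + a d²) + r_9 C b d²)]. Then S(r) = Pr_{c,d}[h(c,d) = h'(c,d) = 0] where h(c,d) = r_1 + r_3 c + r_4 d + C r_6 c² + 2C r_7 cd + C r_8 d² and h'(c,d) = r_2 + r_4 c + r_5 d + C r_7 c² + 2C r_8 cd + C r_9 d². In particular, if r ≠ 0 then S(r) ≤ 2/p. -/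
/-!
The phase of `S(r)` is `a * h(c, d) + b * h'(c, d)`, so summing over `a` and `b` first and using
the orthogonality of additive characters leaves `p²` times the indicator of the common zeros of
`h` and `h'`. If `r ≠ 0`, then one of `h`, `h'` is a nonzero polynomial of total degree at most
two, since each `r i` is, up to the unit `C`, a coefficient of `h` or of `h'`; by Schwartz–Zippel
it has at most `2p` zeros in `F_p²`.
-/

open Finset MvPolynomial

section Counting

variable {K : Type*} [CommRing K]

noncomputable def conic (a₀ a₁ a₂ a₁₁ a₁₂ a₂₂ : K) : MvPolynomial (Fin 2) K :=
  C a₀ + C a₁ * X 0 + C a₂ * X 1 + C a₁₁ * X 0 ^ 2 + C a₁₂ * (X 0 * X 1) + C a₂₂ * X 1 ^ 2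

lemma eval_conic (a₀ a₁ a₂ a₁₁ a₁₂ a₂₂ : K) (x : Fin 2 → K) :
    eval x (conic a₀ a₁ a₂ a₁₁ a₁₂ a₂₂) =
      a₀ + a₁ * x 0 + a₂ * x 1 + a₁₁ * x 0 ^ 2 + a₁₂ * (x 0 * x 1) + a₂₂ * x 1 ^ 2 := by
  simp [conic]

lemma totalDegree_conic_le (a₀ a₁ a₂ a₁₁ a₁₂ a₂₂ : K) :
    (conic a₀ a₁ a₂ a₁₁ a₁₂ a₂₂).totalDegree ≤ 2 := by
  have hCmul (a : K) (f : MvPolynomial (Fin 2) K) : (C a * f).totalDegree ≤ f.totalDegree := by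
    simpa [totalDegree_C] using totalDegree_mul (C a) f
  have hX (i : Fin 2) : (X i : MvPolynomial (Fin 2) K).totalDegree ≤ 1 :=
    (totalDegree_monomial_le _ _).trans (by simp)
  have hXX (i j : Fin 2) : (X i * X j : MvPolynomial (Fin 2) K).totalDegree ≤ 2 :=
    (totalDegree_mul _ _).trans (add_le_add (hX i) (hX j))
  unfold conic
  refine (totalDegree_add _ _).trans <| max_le ((totalDegree_add _ _).trans <| max_le
    ((totalDegree_add _ _).trans <| max_le ((totalDegree_add _ _).trans <| max_le
    ((totalDegree_add _ _).trans <| max_le ?_ ?_) ?_) ?_) ?_) ?_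
  · simp [totalDegree_C]
  · exact (hCmul _ _).trans ((hX 0).trans one_le_two)
  · exact (hCmul _ _).trans ((hX 1).trans one_le_two)
  · exact (hCmul _ _).trans (sq (X 0 : MvPolynomial (Fin 2) K) ▸ hXX 0 0)
  · exact (hCmul _ _).trans (hXX 0 1)
  · exact (hCmul _ _).trans (sq (X 1 : MvPolynomial (Fin 2) K) ▸ hXX 1 1)

lemma conic_eq_zero_iff {a₀ a₁ a₂ a₁₁ a₁₂ a₂₂ : K} :
    conic a₀ a₁ a₂ a₁₁ a₁₂ a₂₂ = 0 ↔ a₀ = 0 ∧ a₁ = 0 ∧ a₂ = 0 ∧ a₁₁ = 0 ∧ a₁₂ = 0 ∧ a₂₂ = 0 := by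
  refine ⟨fun h => ?_, fun ⟨h₀, h₁, h₂, h₁₁, h₁₂, h₂₂⟩ => by simp [conic, *]⟩
  have hcoeff (m : Fin 2 →₀ ℕ) := congrArg (coeff m) h
  simp only [conic, X, monomial_pow, monomial_mul, coeff_add, coeff_C_mul, coeff_monomial,
    coeff_C, coeff_zero] at hcoeff
  refine ⟨?_, ?_, ?_, ?_, ?_, ?_⟩ <;>
  [specialize hcoeff 0; specialize hcoeff (.single 0 1); specialize hcoeff (.single 1 1);
    specialize hcoeff (.single 0 2); specialize hcoeff (.single 0 1 + .single 1 1);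
    specialize hcoeff (.single 1 2)] <;>
  simpa [Finsupp.ext_iff, Fin.forall_fin_two] using hcoeff

variable [IsDomain K] [Fintype K] [DecidableEq K]

lemma card_zeros_le_totalDegree_mul_card {Q : MvPolynomial (Fin 2) K} (hQ : Q ≠ 0) :
    #{x : K × K | eval ![x.1, x.2] Q = 0} ≤ Q.totalDegree * Fintype.card K := by
  have hSZ := schwartz_zippel_totalDegree hQ univ
  rw [Fintype.piFinset_univ, card_univ] at hSZ
  have hcard : #{x : K × K | eval ![x.1, x.2] Q = 0} = #{f : Fin 2 → K | eval f Q = 0} :=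
    card_equiv (finTwoArrowEquiv K).symm fun x => by simp [finTwoArrowEquiv]
  have hpos : (0 : ℚ≥0) < Fintype.card K := by exact_mod_cast Fintype.card_pos
  rw [div_le_div_iff₀ (pow_pos hpos 2) hpos, sq, ← mul_assoc] at hSZ
  rw [hcard]
  exact_mod_cast le_of_mul_le_mul_right hSZ hpos

lemma card_conic_zeros_le {a₀ a₁ a₂ a₁₁ a₁₂ a₂₂ : K}
    (h : ¬(a₀ = 0 ∧ a₁ = 0 ∧ a₂ = 0 ∧ a₁₁ = 0 ∧ a₁₂ = 0 ∧ a₂₂ = 0)) :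
    #{x : K × K | a₀ + a₁ * x.1 + a₂ * x.2 + a₁₁ * x.1 ^ 2 + a₁₂ * (x.1 * x.2) + a₂₂ * x.2 ^ 2 = 0}
      ≤ 2 * Fintype.card K := by
  have hQ : conic a₀ a₁ a₂ a₁₁ a₁₂ a₂₂ ≠ 0 := mt conic_eq_zero_iff.mp h
  calc _ = #{x : K × K | eval ![x.1, x.2] (conic a₀ a₁ a₂ a₁₁ a₁₂ a₂₂) = 0} := by
        simp only [eval_conic, Matrix.cons_val_zero, Matrix.cons_val_one]
    _ ≤ _ := card_zeros_le_totalDegree_mul_card hQ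
    _ ≤ 2 * Fintype.card K := Nat.mul_le_mul_right _ (totalDegree_conic_le ..)

end Counting

lemma sum_addChar_mul_add_mul {R R' ι : Type*} [CommRing R] [Fintype R] [DecidableEq R]
    [CommRing R'] [IsDomain R'] [Fintype ι] {ψ : AddChar R R'} (hψ : ψ.IsPrimitive)
    (f g : ι → R) :
    ∑ a, ∑ b, ∑ x, ψ (a * f x + b * g x) =
      (Fintype.card R : R') ^ 2 * #{x | f x = 0 ∧ g x = 0} := by
  calc ∑ a, ∑ b, ∑ x, ψ (a * f x + b * g x)
      = ∑ x, (∑ a, ψ (a * f x)) * ∑ b, ψ (b * g x) := by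
        simp_rw [AddChar.map_add_eq_mul, sum_mul_sum]
        exact (sum_congr rfl fun _ _ => sum_comm).trans sum_comm
    _ = ∑ x, if f x = 0 ∧ g x = 0 then (Fintype.card R : R') ^ 2 else (0 : R') := by
        refine sum_congr rfl fun x _ => ?_
        rw [AddChar.sum_mulShift _ hψ, AddChar.sum_mulShift _ hψ]
        split_ifs <;> simp_all [sq]
    _ = _ := by rw [sum_ite, sum_const_zero, add_zero, sum_const, nsmul_eq_mul, mul_comm]

lemma card_common_zeros_le {K : Type*} [Field K] [Fintype K] [DecidableEq K] {C : K} (hC : C ≠ 0)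
    {r : Fin 9 → K} (hr : r ≠ 0) :
    #{x : K × K |
        r 0 + r 2 * x.1 + r 3 * x.2 + C * r 5 * x.1 ^ 2 + 2 * C * r 6 * (x.1 * x.2)
          + C * r 7 * x.2 ^ 2 = 0 ∧
        r 1 + r 3 * x.1 + r 4 * x.2 + C * r 6 * x.1 ^ 2 + 2 * C * r 7 * (x.1 * x.2)
          + C * r 8 * x.2 ^ 2 = 0} ≤ 2 * Fintype.card K := by
  by_cases hh : r 0 = 0 ∧ r 2 = 0 ∧ r 3 = 0 ∧ C * r 5 = 0 ∧ 2 * C * r 6 = 0 ∧ C * r 7 = 0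
  · have hh' : ¬(r 1 = 0 ∧ r 3 = 0 ∧ r 4 = 0 ∧ C * r 6 = 0 ∧ 2 * C * r 7 = 0 ∧ C * r 8 = 0) := by
      rintro ⟨h1, -, h4, h6, -, h8⟩
      obtain ⟨h0, h2, h3, h5, -, h7⟩ := hh
      simp only [mul_eq_zero, hC, false_or] at h5 h6 h7 h8
      exact hr (funext fun i => by fin_cases i <;> assumption)
    exact (card_le_card (monotone_filter_right _ fun _ _ => And.right)).trans
      (card_conic_zeros_le hh')
  · exact (card_le_card (monotone_filter_right _ fun _ _ => And.left)).trans
      (card_conic_zeros_le hh)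

lemma norm_natCast_div_sq_le {n m : ℕ} (h : n ≤ 2 * m) : ‖(n : ℂ) / (m : ℂ) ^ 2‖ ≤ 2 / m := by
  rcases Nat.eq_zero_or_pos m with rfl | hm
  · simp
  have hm' : (0 : ℝ) < m := Nat.cast_pos.mpr hm
  rw [norm_div, norm_pow, Complex.norm_natCast, Complex.norm_natCast,
    div_le_div_iff₀ (pow_pos hm' 2) hm']
  calc (n : ℝ) * m ≤ 2 * m * m := by gcongr; exact_mod_cast h
    _ = 2 * m ^ 2 := by ring

theorem stmt14_general (p : ℕ) [Fact p.Prime] (C : ZMod p) (hC : C ≠ 0)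
    (r : Fin 9 → ZMod p)
    (e : ZMod p → ℂ)
    (he : ∀ z : ZMod p, e z = Complex.exp (2 * Real.pi * Complex.I * (z.val : ℂ) / p))
    (S : ℂ)
    (hS : S = (∑ a : ZMod p, ∑ b : ZMod p, ∑ c : ZMod p, ∑ d : ZMod p,
        e (r 0 * a + r 1 * b + r 2 * (a * c) + r 3 * (a * d + b * c) + r 4 * (b * d)
          + r 5 * C * (a * c ^ 2) + r 6 * C * (b * c ^ 2 + 2 * (a * c * d))
          + r 7 * C * (2 * (b * c * d) + a * d ^ 2) + r 8 * C * (b * d ^ 2)))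
      / (p : ℂ) ^ 4) :
    S = ((Finset.univ.filter (fun cd : ZMod p × ZMod p =>
          r 0 + r 2 * cd.1 + r 3 * cd.2 + C * r 5 * cd.1 ^ 2
              + 2 * C * r 6 * (cd.1 * cd.2) + C * r 7 * cd.2 ^ 2 = 0 ∧
          r 1 + r 3 * cd.1 + r 4 * cd.2 + C * r 6 * cd.1 ^ 2
              + 2 * C * r 7 * (cd.1 * cd.2) + C * r 8 * cd.2 ^ 2 = 0)).card : ℂ)
        / (p : ℂ) ^ 2 ∧
      (r ≠ 0 → ‖S‖ ≤ 2 / p) := by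
  set h : ZMod p × ZMod p → ZMod p := fun cd =>
    r 0 + r 2 * cd.1 + r 3 * cd.2 + C * r 5 * cd.1 ^ 2
      + 2 * C * r 6 * (cd.1 * cd.2) + C * r 7 * cd.2 ^ 2 with h_def
  set h' : ZMod p × ZMod p → ZMod p := fun cd =>
    r 1 + r 3 * cd.1 + r 4 * cd.2 + C * r 6 * cd.1 ^ 2
      + 2 * C * r 7 * (cd.1 * cd.2) + C * r 8 * cd.2 ^ 2 with h'_def
  have hphase (a b c d : ZMod p) :
      r 0 * a + r 1 * b + r 2 * (a * c) + r 3 * (a * d + b * c) + r 4 * (b * d)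
        + r 5 * C * (a * c ^ 2) + r 6 * C * (b * c ^ 2 + 2 * (a * c * d))
        + r 7 * C * (2 * (b * c * d) + a * d ^ 2) + r 8 * C * (b * d ^ 2)
      = a * h (c, d) + b * h' (c, d) := by
    simp only [h_def, h'_def]; ring
  have he' : e = ZMod.stdAddChar := funext fun z => by
    rw [he, ZMod.stdAddChar_apply, ZMod.toCircle_apply]
  have hsum := sum_addChar_mul_add_mul (ZMod.isPrimitive_stdAddChar p) h h'
  simp only [ZMod.card, Fintype.sum_prod_type] at hsum
  have hp0 : (p : ℂ) ≠ 0 := Nat.cast_ne_zero.mpr (Fact.out : p.Prime).ne_zero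
  have hS' : S = (#{x | h x = 0 ∧ h' x = 0} : ℂ) / (p : ℂ) ^ 2 := by
    simp only [hS, he', hphase, hsum]
    field_simp
  refine ⟨hS', fun hr => hS' ▸ norm_natCast_div_sq_le ?_⟩
  simpa only [ZMod.card] using card_common_zeros_le hC hr

theorem stmt14 (p : ℕ) [Fact p.Prime] (hp : 2 < p) (C : ZMod p) (hC : C ≠ 0)
    (r : Fin 9 → ZMod p)
    (e : ZMod p → ℂ)
    (he : ∀ z : ZMod p, e z = Complex.exp (2 * Real.pi * Complex.I * (z.val : ℂ) / p))
    (S : ℂ)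
    (hS : S = (∑ a : ZMod p, ∑ b : ZMod p, ∑ c : ZMod p, ∑ d : ZMod p,
        e (r 0 * a + r 1 * b + r 2 * (a * c) + r 3 * (a * d + b * c) + r 4 * (b * d)
          + r 5 * C * (a * c ^ 2) + r 6 * C * (b * c ^ 2 + 2 * (a * c * d))
          + r 7 * C * (2 * (b * c * d) + a * d ^ 2) + r 8 * C * (b * d ^ 2)))
      / (p : ℂ) ^ 4) :
    S = ((Finset.univ.filter (fun cd : ZMod p × ZMod p =>
          r 0 + r 2 * cd.1 + r 3 * cd.2 + C * r 5 * cd.1 ^ 2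
              + 2 * C * r 6 * (cd.1 * cd.2) + C * r 7 * cd.2 ^ 2 = 0 ∧
          r 1 + r 3 * cd.1 + r 4 * cd.2 + C * r 6 * cd.1 ^ 2
              + 2 * C * r 7 * (cd.1 * cd.2) + C * r 8 * cd.2 ^ 2 = 0)).card : ℂ)
        / (p : ℂ) ^ 2 ∧
      (r ≠ 0 → ‖S‖ ≤ 2 / p) :=
  stmt14_general p C hC r e he S hS
end
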